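/- Assume A ∩ A'^⊥ = A ∩ A', and let L ⊆ V be a subspace such that A^⊥ ∩ A'^⊥ = L ⊕ (A ∩ A') (internal direct sum). Then A^⊥ = L ⊕ A and A'^⊥ = L ⊕ A'; in particular the pair (A,A') is good. -/

import Mathlib

open Module Submodule

variable {k V : Type*} [Field k] [AddCommGroup V] [Module k V]

/-- The orthogonal `A^⊥ = {x ∈ V : ⟨x,a⟩ = 0 ∀ a ∈ A}` of a subspace `A` of `V` with
respect to a bilinear form `B` on `V`. -/
def perp (B : V →ₗ[k] V →ₗ[k] k) (A : Submodule k V) : Submodule k V where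
  carrier := {x | ∀ a ∈ A, B x a = 0}
  add_mem' := fun {x y} hx hy a ha => by
    simp [map_add, LinearMap.add_apply, hx a ha, hy a ha]
  zero_mem' := fun a ha => by simp
  smul_mem' := fun c x hx a ha => by
    simp [map_smul, LinearMap.smul_apply, hx a ha]

/-- The pair `(A,A')` of isotropic subspaces is *good* if there is a subspace `L` with
`A^⊥ = L ⊕ A` and `A'^⊥ = L ⊕ A'` (internal direct sums). -/
def IsGood (B : V →ₗ[k] V →ₗ[k] k) (A A' : Submodule k V) : Prop :=
  ∃ L : Submodule k V,
    (Disjoint L A ∧ L ⊔ A = perp B A) ∧ (Disjoint L A' ∧ L ⊔ A' = perp B A')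


/-!
Because `dim A = dim A'`, counting the rank of the pairing `A × A' → k` from both sides gives
`dim (A' ∩ A^⊥) = dim (A ∩ A'^⊥)`, so the hypothesis `A ∩ A'^⊥ = A ∩ A'` forces its mirror image
`A' ∩ A^⊥ = A ∩ A'`. Now `L ⊆ A^⊥ ∩ A'^⊥` meets `A` inside `A ∩ A'^⊥ = A ∩ A'`, hence trivially,
and `dim L = dim V - dim A - dim A' = dim A^⊥ - dim A`, so `L ⊕ A ⊆ A^⊥` is all of `A^⊥`;
symmetrically for `A'`.
-/

namespace LinearMap.BilinForm

variable {B : LinearMap.BilinForm k V}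

lemma perp_eq_orthogonal (hr : B.IsRefl) (A : Submodule k V) : perp B A = B.orthogonal A := by
  ext x
  exact ⟨fun hx a ha => hr _ _ (hx a ha), fun hx a ha => hr _ _ (hx a ha)⟩

lemma orthogonal_sup (A A' : Submodule k V) :
    B.orthogonal (A ⊔ A') = B.orthogonal A ⊓ B.orthogonal A' := by
  refine le_antisymm (le_inf (orthogonal_le le_sup_left) (orthogonal_le le_sup_right)) ?_
  rintro x ⟨hxA, hxA'⟩ y hy
  obtain ⟨a, ha, a', ha', rfl⟩ := mem_sup.mp hy
  have hax : B a x = 0 := hxA a ha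
  have ha'x : B a' x = 0 := hxA' a' ha'
  show B (a + a') x = 0
  rw [map_add, LinearMap.add_apply, hax, ha'x, add_zero]

variable [FiniteDimensional k V]

lemma orthogonal_inf (hN : B.Nondegenerate) (hr : B.IsRefl) (A A' : Submodule k V) :
    B.orthogonal (A ⊓ A') = B.orthogonal A ⊔ B.orthogonal A' := by
  conv_lhs => rw [← orthogonal_orthogonal hN hr A, ← orthogonal_orthogonal hN hr A',
    ← orthogonal_sup, orthogonal_orthogonal hN hr]

lemma finrank_add_finrank_orthogonal_eq (hN : B.Nondegenerate) (W : Submodule k V) :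
    finrank k W + finrank k (B.orthogonal W) = finrank k V := by
  have := finrank_orthogonal hN W
  have := W.finrank_le
  omega

lemma finrank_inf_orthogonal_add_finrank (hN : B.Nondegenerate) (hr : B.IsRefl)
    (A A' : Submodule k V) :
    finrank k ↥(A ⊓ B.orthogonal A') + finrank k A' =
      finrank k ↥(A' ⊓ B.orthogonal A) + finrank k A := by
  have hperp : B.orthogonal (A ⊓ B.orthogonal A') = B.orthogonal A ⊔ A' := by
    rw [orthogonal_inf hN hr, orthogonal_orthogonal hN hr]
  have h₁ := finrank_add_finrank_orthogonal_eq hN (A ⊓ B.orthogonal A')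
  have h₂ := finrank_add_finrank_orthogonal_eq hN A
  have h₃ := finrank_sup_add_finrank_inf_eq (B.orthogonal A) A'
  rw [hperp] at h₁
  rw [inf_comm] at h₃
  omega

lemma inf_orthogonal_eq_inf_of_finrank_eq (hN : B.Nondegenerate) (hr : B.IsRefl)
    {A A' : Submodule k V} (hA : A ≤ B.orthogonal A) (hdim : finrank k A = finrank k A')
    (h : A ⊓ B.orthogonal A' = A ⊓ A') : A' ⊓ B.orthogonal A = A' ⊓ A := by
  refine (eq_of_le_of_finrank_le (le_inf inf_le_left (inf_le_right.trans hA)) ?_).symm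
  have := finrank_inf_orthogonal_add_finrank hN hr A A'
  rw [h, inf_comm] at this
  omega

lemma finrank_add_finrank_add_finrank_eq (hN : B.Nondegenerate) {A A' L : Submodule k V}
    (hL : Disjoint L (A ⊓ A')) (hLsup : L ⊔ (A ⊓ A') = B.orthogonal A ⊓ B.orthogonal A') :
    finrank k L + finrank k A + finrank k A' = finrank k V := by
  have h₁ := finrank_sup_add_finrank_inf_eq L (A ⊓ A')
  have h₂ := finrank_sup_add_finrank_inf_eq A A'
  have h₃ := finrank_add_finrank_orthogonal_eq hN (A ⊔ A')
  rw [hLsup, hL.eq_bot, finrank_bot, ← orthogonal_sup] at h₁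
  omega

lemma disjoint_and_sup_eq_orthogonal (hN : B.Nondegenerate) {A A' L : Submodule k V}
    (hA : A ≤ B.orthogonal A) (hdim : finrank k A = finrank k A')
    (h : A ⊓ B.orthogonal A' = A ⊓ A') (hL : Disjoint L (A ⊓ A'))
    (hLsup : L ⊔ (A ⊓ A') = B.orthogonal A ⊓ B.orthogonal A') :
    Disjoint L A ∧ L ⊔ A = B.orthogonal A := by
  have hL_le : L ≤ B.orthogonal A ⊓ B.orthogonal A' := hLsup ▸ le_sup_left
  have hLA : Disjoint L A := by
    have hLA_le : L ⊓ A ≤ A ⊓ B.orthogonal A' :=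
      le_inf inf_le_right (inf_le_left.trans (hL_le.trans inf_le_right))
    exact disjoint_iff_inf_le.mpr ((le_inf inf_le_left (hLA_le.trans h.le)).trans hL.le_bot)
  refine ⟨hLA, eq_of_le_of_finrank_le (sup_le (hL_le.trans inf_le_left) hA) ?_⟩
  have h₁ := finrank_add_finrank_add_finrank_eq hN hL hLsup
  have h₂ := finrank_add_finrank_orthogonal_eq hN A
  have h₃ := finrank_sup_add_finrank_inf_eq L A
  rw [hLA.eq_bot, finrank_bot] at h₃
  omega

end LinearMap.BilinForm

open LinearMap.BilinForm

theorem stmt8_general [FiniteDimensional k V] (t : ℕ)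
    (B : V →ₗ[k] V →ₗ[k] k)
    (halt : ∀ x : V, B x x = 0)
    (hnd : ∀ x : V, (∀ y : V, B x y = 0) → x = 0)
    (A A' : Submodule k V)
    (hA : A ≤ perp B A) (hA' : A' ≤ perp B A')
    (hdA : finrank k A = t) (hdA' : finrank k A' = t)
    (hyp : A ⊓ perp B A' = A ⊓ A')
    (L : Submodule k V)
    (hL1 : Disjoint L (A ⊓ A')) (hL2 : L ⊔ (A ⊓ A') = perp B A ⊓ perp B A') :
    (Disjoint L A ∧ L ⊔ A = perp B A) ∧ (Disjoint L A' ∧ L ⊔ A' = perp B A') ∧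
      IsGood B A A' := by
  have hr : B.IsRefl := LinearMap.IsAlt.isRefl halt
  have hN : B.Nondegenerate := Nondegenerate.ofSeparatingLeft hnd
  simp only [perp_eq_orthogonal hr] at hA hA' hyp hL2
  have hdim : finrank k A = finrank k A' := hdA.trans hdA'.symm
  have hyp' := inf_orthogonal_eq_inf_of_finrank_eq hN hr hA hdim hyp
  have hA_side := disjoint_and_sup_eq_orthogonal hN hA hdim hyp hL1 hL2
  have hA'_side := disjoint_and_sup_eq_orthogonal hN hA' hdim.symm hyp'
    (inf_comm A A' ▸ hL1) (by rw [inf_comm A', inf_comm (orthogonal B A'), hL2])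
  rw [← perp_eq_orthogonal hr] at hA_side hA'_side
  exact ⟨hA_side, hA'_side, L, hA_side, hA'_side⟩

/-- Let `V` be a `2n`-dimensional symplectic vector space over `k` and let
`A, A'` be `t`-dimensional isotropic subspaces.  Assume `A ∩ A'^⊥ = A ∩ A'` and let
`L ⊆ V` be a subspace with `A^⊥ ∩ A'^⊥ = L ⊕ (A ∩ A')` (internal direct sum).
Then `A^⊥ = L ⊕ A` and `A'^⊥ = L ⊕ A'`; in particular the pair `(A,A')` is good. -/
theorem stmt8 [FiniteDimensional k V] (n t : ℕ) (hn : 1 ≤ n) (htn : t ≤ n)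
    (B : V →ₗ[k] V →ₗ[k] k)
    (hdim : finrank k V = 2 * n)
    (halt : ∀ x : V, B x x = 0)
    (hnd : ∀ x : V, (∀ y : V, B x y = 0) → x = 0)
    (A A' : Submodule k V)
    (hA : A ≤ perp B A) (hA' : A' ≤ perp B A')
    (hdA : finrank k A = t) (hdA' : finrank k A' = t)
    (hyp : A ⊓ perp B A' = A ⊓ A')
    (L : Submodule k V)
    (hL1 : Disjoint L (A ⊓ A')) (hL2 : L ⊔ (A ⊓ A') = perp B A ⊓ perp B A') :
    (Disjoint L A ∧ L ⊔ A = perp B A) ∧ (Disjoint L A' ∧ L ⊔ A' = perp B A') ∧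
      IsGood B A A' :=
  stmt8_general t B halt hnd A A' hA hA' hdA hdA' hyp L hL1 hL2
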